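/- Let R ∈ PPT(A₁:B₁) and Q ∈ PPT(A₂:B₂) be PPT positive operators. Then the PPT communication value is multiplicative: cv^PPT(R ⊗ Q) = cv^PPT(R)·cv^PPT(Q), where cv^PPT(X) = max{Tr[XΩ] : Ω ≥ 0, Γ(Ω) ≥ 0, Tr_A Ω = I^B}. -/

import Mathlib

/-!
Upper bound: for `Ω` feasible for `R ⊗ Q`, contracting `Ω` against `Q` on the primed systems gives
`Ω_Q = Tr_{A'B'}[Ω (1 ⊗ Q)]` on `A : B` with `Tr[(R ⊗ Q) Ω] = Tr[R Ω_Q]`. It is positive and PPT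
because `Q` is, and `Tr_A Ω_Q ≤ cv^PPT(Q) • 1`: for a vector `x`, `⟪x, Tr_A Ω_Q x⟫ = Tr[Q Ω_x]`
where the compression `Ω_x` of `Ω` along `x` is `‖x‖²` times a feasible point for `Q`. Padding
`Ω_Q` with `|A|⁻¹ • 1 ⊗ (cv^PPT(Q) • 1 - Tr_A Ω_Q)` and rescaling gives a feasible point for `R`,
and positivity of `R` bounds `Tr[R Ω_Q]` by `cv^PPT(Q) cv^PPT(R)`.
Lower bound: tensor products of feasible points are feasible, and the values multiply.
-/

open scoped BigOperators Kronecker ComplexOrder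
open Matrix

noncomputable section

/-- A density operator: positive semidefinite with unit trace. -/
def IsDensity {ι : Type*} [Fintype ι] (ρ : Matrix ι ι ℂ) : Prop :=
  ρ.PosSemidef ∧ ρ.trace = 1

/-- A separable bipartite positive operator: a nonnegative combination of
tensor products of positive operators. -/
def IsSep {ιA ιB : Type*} [Fintype ιA] [Fintype ιB]
    (Ω : Matrix (ιA × ιB) (ιA × ιB) ℂ) : Prop :=
  ∃ (n : ℕ) (a : Fin n → Matrix ιA ιA ℂ) (b : Fin n → Matrix ιB ιB ℂ),
    (∀ i, (a i).PosSemidef) ∧ (∀ i, (b i).PosSemidef) ∧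
      Ω = ∑ i, a i ⊗ₖ b i

/-- Partial trace over the first (A) system. -/
def ptraceA {ιA ιB : Type*} [Fintype ιA]
    (Ω : Matrix (ιA × ιB) (ιA × ιB) ℂ) : Matrix ιB ιB ℂ :=
  Matrix.of fun k l => ∑ i, Ω (i, k) (i, l)

/-- The Choi matrix of a linear map on matrices. -/
def choi {ιA ιB : Type*} [Fintype ιA] [DecidableEq ιA]
    (Φ : Matrix ιA ιA ℂ →ₗ[ℂ] Matrix ιB ιB ℂ) :
    Matrix (ιA × ιB) (ιA × ιB) ℂ :=
  Matrix.of fun p q => Φ (Matrix.single p.1 q.1 1) p.2 q.2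

/-- A quantum channel: a completely positive (Choi matrix PSD) trace-preserving
linear map. -/
structure Channel (ιA ιB : Type*) [Fintype ιA] [DecidableEq ιA] [Fintype ιB] where
  map : Matrix ιA ιA ℂ →ₗ[ℂ] Matrix ιB ιB ℂ
  cp : (choi map).PosSemidef
  tp : ∀ X, (map X).trace = X.trace

/-- The communication value, via the conic program over the separable cone:
`cv(N) = max { Tr[Ω J_N] : Ω separable, Tr_A Ω = I }`. -/
def cv {ιA ιB : Type*} [Fintype ιA] [DecidableEq ιA] [Fintype ιB] [DecidableEq ιB]
    (N : Channel ιA ιB) : ℝ :=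
  sSup {r | ∃ Ω : Matrix (ιA × ιB) (ιA × ιB) ℂ,
    IsSep Ω ∧ ptraceA Ω = 1 ∧ r = ((Ω * choi N.map).trace).re}

/-- The operational communication value: supremum over finite families of input
states and POVMs of `∑_x Tr[Π_x N(ρ_x)]`. -/
def cvOp {ιA ιB : Type*} [Fintype ιA] [DecidableEq ιA] [Fintype ιB] [DecidableEq ιB]
    (N : Channel ιA ιB) : ℝ :=
  sSup {r | ∃ (n : ℕ) (ρ : Fin n → Matrix ιA ιA ℂ) (E : Fin n → Matrix ιB ιB ℂ),
    (∀ x, IsDensity (ρ x)) ∧ (∀ x, (E x).PosSemidef) ∧ (∑ x, E x) = 1 ∧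
      r = (∑ x, (E x * N.map (ρ x)).trace).re}

/-- Maximal overlap of a bipartite operator with product unit vectors
(`Λ²`, exponential of minus the geometric measure of entanglement). -/
def lam2 {ιA ιB : Type*} [Fintype ιA] [Fintype ιB]
    (ω : Matrix (ιA × ιB) (ιA × ιB) ℂ) : ℝ :=
  sSup {r | ∃ (a : ιA → ℂ) (b : ιB → ℂ),
    (∑ i, ‖a i‖ ^ 2) = 1 ∧ (∑ k, ‖b k‖ ^ 2) = 1 ∧
      r = (star (fun p : ιA × ιB => a p.1 * b p.2) ⬝ᵥ
        ω *ᵥ fun p : ιA × ιB => a p.1 * b p.2).re}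

end

/-- Partial transpose on the second (B) system. -/
def ptransposeB {ιA ιB : Type*}
    (Ω : Matrix (ιA × ιB) (ιA × ιB) ℂ) : Matrix (ιA × ιB) (ιA × ιB) ℂ :=
  Matrix.of fun p q => Ω (p.1, q.2) (q.1, p.2)

/-- The PPT relaxation of the communication value of a bipartite operator `X`:
`cv^PPT(X) = max { Tr[XΩ] : Ω ≥ 0, Γ(Ω) ≥ 0, Tr_A Ω = I }`. -/
noncomputable def cvPPT {ιA ιB : Type*} [Fintype ιA] [Fintype ιB] [DecidableEq ιB]
    (X : Matrix (ιA × ιB) (ιA × ιB) ℂ) : ℝ :=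
  sSup {r | ∃ Ω : Matrix (ιA × ιB) (ιA × ιB) ℂ,
    Ω.PosSemidef ∧ (ptransposeB Ω).PosSemidef ∧ ptraceA Ω = 1 ∧
      r = ((X * Ω).trace).re}

/-- Tensor product of bipartite operators, reindexed along the cut
`A₁A₂ : B₁B₂`. -/
def tensorCut {ιA ιB ιA' ιB' : Type*}
    (R : Matrix (ιA × ιB) (ιA × ιB) ℂ) (Q : Matrix (ιA' × ιB') (ιA' × ιB') ℂ) :
    Matrix ((ιA × ιA') × (ιB × ιB')) ((ιA × ιA') × (ιB × ιB')) ℂ :=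
  Matrix.of fun p q =>
    R (p.1.1, p.2.1) (q.1.1, q.2.1) * Q (p.1.2, p.2.2) (q.1.2, q.2.2)

namespace Matrix

variable {α 𝕜 ι κ : Type*} [RCLike 𝕜]

section Trace

variable [Fintype ι]

lemma PosSemidef.trace_mul_nonneg {X Ω : Matrix ι ι 𝕜} (hX : X.PosSemidef)
    (hΩ : Ω.PosSemidef) : 0 ≤ (X * Ω).trace := by
  classical
  open scoped MatrixOrder in
  obtain ⟨B, rfl⟩ := CStarAlgebra.nonneg_iff_eq_star_mul_self.mp hΩ.nonneg
  rw [star_eq_conjTranspose, ← Matrix.mul_assoc, trace_mul_comm, ← Matrix.mul_assoc]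
  exact (hX.mul_mul_conjTranspose_same B).trace_nonneg

lemma PosSemidef.re_trace_mul_nonneg {X Ω : Matrix ι ι 𝕜} (hX : X.PosSemidef)
    (hΩ : Ω.PosSemidef) : 0 ≤ RCLike.re (X * Ω).trace :=
  (RCLike.nonneg_iff.mp (hX.trace_mul_nonneg hΩ)).1

lemma PosSemidef.norm_apply_le_re_trace {Ω : Matrix ι ι 𝕜} (hΩ : Ω.PosSemidef) (p q : ι) :
    ‖Ω p q‖ ≤ RCLike.re Ω.trace := by
  have hre : ∀ r, Ω r r = RCLike.re (Ω r r) := fun r =>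
    (RCLike.conj_eq_iff_re.mp (hΩ.isHermitian.apply r r)).symm
  have hdiag : ∀ r, 0 ≤ RCLike.re (Ω r r) ∧ RCLike.re (Ω r r) ≤ RCLike.re Ω.trace := fun r =>
    ⟨(RCLike.nonneg_iff.mp hΩ.diag_nonneg).1, by
      rw [trace, map_sum]
      exact Finset.single_le_sum (f := fun i => RCLike.re (Ω i i))
        (fun i _ => (RCLike.nonneg_iff.mp hΩ.diag_nonneg).1) (Finset.mem_univ r)⟩
  have hdet := (hΩ.submatrix ![p, q]).det_nonneg
  rw [det_fin_two] at hdet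
  simp only [submatrix_apply, Matrix.cons_val_zero, Matrix.cons_val_one] at hdet
  rw [← hΩ.isHermitian.apply q p, hre p, hre q, RCLike.star_def, RCLike.mul_conj,
    ← RCLike.ofReal_mul, ← RCLike.ofReal_pow, ← RCLike.ofReal_sub, RCLike.ofReal_nonneg,
    sub_nonneg] at hdet
  nlinarith [hdiag p, hdiag q, norm_nonneg (Ω p q)]

lemma re_trace_mul_le (X : Matrix ι ι 𝕜) {Ω : Matrix ι ι 𝕜} (hΩ : Ω.PosSemidef) :
    RCLike.re (X * Ω).trace ≤ (∑ p, ∑ q, ‖X p q‖) * RCLike.re Ω.trace := by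
  have hexp : (X * Ω).trace = ∑ p, ∑ q, X p q * Ω q p := by simp [trace, mul_apply]
  simp only [hexp, map_sum, Finset.sum_mul]
  refine Finset.sum_le_sum fun p _ => Finset.sum_le_sum fun q _ => ?_
  calc RCLike.re (X p q * Ω q p) ≤ ‖X p q * Ω q p‖ := RCLike.re_le_norm _
    _ = ‖X p q‖ * ‖Ω q p‖ := norm_mul _ _
    _ ≤ ‖X p q‖ * RCLike.re Ω.trace :=
      mul_le_mul_of_nonneg_left (hΩ.norm_apply_le_re_trace q p) (norm_nonneg _)

lemma trace_submatrix_equiv [AddCommMonoid α] [Fintype κ] (M : Matrix ι ι α) (e : κ ≃ ι) :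
    (M.submatrix e e).trace = M.trace :=
  e.sum_comp fun i => M i i

lemma trace_submatrix_mul_equiv [NonUnitalNonAssocSemiring α] [Fintype κ] (X : Matrix ι ι α)
    (Ω : Matrix κ κ α) (e : ι ≃ κ) :
    (X.submatrix e.symm e.symm * Ω).trace = (X * Ω.submatrix e e).trace := by
  conv_lhs => rw [← submatrix_id_id Ω, ← e.self_comp_symm, ← submatrix_submatrix,
    submatrix_mul_equiv, trace_submatrix_equiv]

end Trace

section PtraceRightMul

variable [Fintype κ]

/-- `M.ptraceRightMul P = Tr_κ [M (1 ⊗ P)]`. -/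
def ptraceRightMul [AddCommMonoid α] [Mul α] (M : Matrix (ι × κ) (ι × κ) α) (P : Matrix κ κ α) :
    Matrix ι ι α :=
  of fun i j => ∑ k, ∑ l, M (i, k) (j, l) * P l k

lemma trace_kronecker_mul [CommSemiring α] [Fintype ι] (R : Matrix ι ι α) (P : Matrix κ κ α)
    (M : Matrix (ι × κ) (ι × κ) α) :
    ((R ⊗ₖ P) * M).trace = (R * M.ptraceRightMul P).trace := by
  simp only [trace, diag, mul_apply, ptraceRightMul, of_apply, kroneckerMap_apply,
    Fintype.sum_prod_type, Finset.mul_sum]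
  refine Finset.sum_congr rfl fun i _ => ?_
  rw [Finset.sum_comm]
  refine Finset.sum_congr rfl fun j _ => ?_
  rw [Finset.sum_comm]
  exact Finset.sum_congr rfl fun l _ => Finset.sum_congr rfl fun k _ => by ring

lemma ptraceRightMul_one [CommSemiring α] [DecidableEq ι] [DecidableEq κ] (T : Matrix κ κ α) :
    (1 : Matrix (ι × κ) (ι × κ) α).ptraceRightMul T = T.trace • 1 := by
  ext i j
  by_cases h : i = j <;> simp [ptraceRightMul, one_apply, h, trace]

lemma PosSemidef.ptraceRightMul [Fintype ι] {M : Matrix (ι × κ) (ι × κ) 𝕜} {P : Matrix κ κ 𝕜}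
    (hM : M.PosSemidef) (hP : P.PosSemidef) : (M.ptraceRightMul P).PosSemidef := by
  classical
  let L : Matrix (ι × κ) ι 𝕜 := of fun a i => if a.1 = i then 1 else 0
  -- `Lᴴ N L` sums the `κ × κ` blocks of `N`; here `N = M ⊙ (J ⊗ Pᵀ)` is a Schur product
  have hL : M.ptraceRightMul P = Lᴴ * (M ⊙ Pᵀ.submatrix Prod.snd Prod.snd) * L := by
    ext i j
    simp only [Matrix.ptraceRightMul, of_apply, mul_apply, conjTranspose_apply, RCLike.star_def,
      MonoidWithZeroHom.map_ite_one_zero, hadamard_apply, submatrix_apply, transpose_apply,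
      ite_mul, one_mul, zero_mul, Fintype.sum_prod_type, Finset.sum_ite_irrel,
      Finset.sum_const_zero, Finset.sum_ite_eq', Finset.mem_univ, ↓reduceIte, mul_ite, mul_one,
      mul_zero, L]
    exact Finset.sum_comm
  rw [hL]
  exact (hM.hadamard (hP.transpose.submatrix _)).conjTranspose_mul_mul_same L

end PtraceRightMul

end Matrix

lemma Real.sSup_mul_sSup_le {S T : Set ℝ} {c : ℝ} (hS : ∀ s ∈ S, 0 ≤ s) (hT : ∀ t ∈ T, 0 ≤ t)
    (hc : 0 ≤ c) (h : ∀ s ∈ S, ∀ t ∈ T, s * t ≤ c) : sSup S * sSup T ≤ c := by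
  rw [mul_comm, ← smul_eq_mul, ← Real.sSup_smul_of_nonneg (Real.sSup_nonneg hT)]
  refine Real.sSup_le ?_ hc
  rintro _ ⟨s, hs, rfl⟩
  change sSup T * s ≤ c
  rw [mul_comm, ← smul_eq_mul, ← Real.sSup_smul_of_nonneg (hS s hs)]
  refine Real.sSup_le ?_ hc
  rintro _ ⟨t, ht, rfl⟩
  exact h s hs t ht

section PartialTrace

variable {ιA ιB : Type*}

lemma ptransposeB_add (M N : Matrix (ιA × ιB) (ιA × ιB) ℂ) :
    ptransposeB (M + N) = ptransposeB M + ptransposeB N :=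
  rfl

lemma ptransposeB_smul (c : ℂ) (M : Matrix (ιA × ιB) (ιA × ιB) ℂ) :
    ptransposeB (c • M) = c • ptransposeB M :=
  rfl

lemma ptransposeB_kronecker (X : Matrix ιA ιA ℂ) (M : Matrix ιB ιB ℂ) :
    ptransposeB (X ⊗ₖ M) = X ⊗ₖ Mᵀ :=
  rfl

variable [Fintype ιA]

lemma ptraceA_add (M N : Matrix (ιA × ιB) (ιA × ιB) ℂ) :
    ptraceA (M + N) = ptraceA M + ptraceA N := by
  ext k l
  simp [ptraceA, Finset.sum_add_distrib]

lemma ptraceA_smul (c : ℂ) (M : Matrix (ιA × ιB) (ιA × ιB) ℂ) :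
    ptraceA (c • M) = c • ptraceA M := by
  ext k l
  simp [ptraceA, Finset.mul_sum]

lemma ptraceA_kronecker (X : Matrix ιA ιA ℂ) (M : Matrix ιB ιB ℂ) :
    ptraceA (X ⊗ₖ M) = X.trace • M := by
  ext k l
  simp [ptraceA, trace, Finset.sum_mul]

lemma ptraceA_eq_sum (M : Matrix (ιA × ιB) (ιA × ιB) ℂ) :
    ptraceA M = ∑ i, M.submatrix (Prod.mk i) (Prod.mk i) := by
  ext k l
  simp [ptraceA, Matrix.sum_apply]

lemma Matrix.PosSemidef.ptraceA {M : Matrix (ιA × ιB) (ιA × ιB) ℂ} (hM : M.PosSemidef) :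
    (ptraceA M).PosSemidef := by
  rw [ptraceA_eq_sum]
  exact posSemidef_sum _ fun i _ => hM.submatrix _

lemma trace_ptraceA [Fintype ιB] (M : Matrix (ιA × ιB) (ιA × ιB) ℂ) :
    (ptraceA M).trace = M.trace := by
  simp only [trace, diag, ptraceA, of_apply, Fintype.sum_prod_type]
  exact Finset.sum_comm

lemma star_dotProduct_ptraceA_mulVec [Fintype ιB] [DecidableEq ιA]
    (M : Matrix (ιA × ιB) (ιA × ιB) ℂ) (x : ιB → ℂ) :
    star x ⬝ᵥ ptraceA M *ᵥ x = ((1 ⊗ₖ vecMulVec x (star x)) * M).trace := by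
  simp only [dotProduct, Pi.star_apply, RCLike.star_def, mulVec, ptraceA, of_apply,
    Finset.sum_mul, Finset.mul_sum, trace, vecMulVec, diag_apply, mul_apply, kroneckerMap_apply,
    one_apply, ite_mul, one_mul, zero_mul, Fintype.sum_prod_type, Finset.sum_ite_irrel,
    Finset.sum_const_zero, Finset.sum_ite_eq, Finset.mem_univ, ↓reduceIte]
  simp only [Finset.sum_comm (γ := ιA)]
  rw [Finset.sum_comm]
  exact Finset.sum_congr rfl fun _ _ => Finset.sum_congr rfl fun _ _ =>
    Finset.sum_congr rfl fun _ _ => by ring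

end PartialTrace

section Bipartite

variable {ιA ιB ιA' ιB' : Type*}

def swapParties (Ω : Matrix ((ιA × ιA') × (ιB × ιB')) ((ιA × ιA') × (ιB × ιB')) ℂ) :
    Matrix ((ιA' × ιA) × (ιB' × ιB)) ((ιA' × ιA) × (ιB' × ιB)) ℂ :=
  Ω.submatrix ((Equiv.prodComm ιA' ιA).prodCongr (Equiv.prodComm ιB' ιB))
    ((Equiv.prodComm ιA' ιA).prodCongr (Equiv.prodComm ιB' ιB))

lemma tensorCut_eq_submatrix_kronecker (R : Matrix (ιA × ιB) (ιA × ιB) ℂ)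
    (Q : Matrix (ιA' × ιB') (ιA' × ιB') ℂ) :
    tensorCut R Q = (R ⊗ₖ Q).submatrix (Equiv.prodProdProdComm ιA ιB ιA' ιB').symm
      (Equiv.prodProdProdComm ιA ιB ιA' ιB').symm :=
  rfl

lemma ptransposeB_tensorCut (M : Matrix (ιA × ιB) (ιA × ιB) ℂ)
    (N : Matrix (ιA' × ιB') (ιA' × ιB') ℂ) :
    ptransposeB (tensorCut M N) = tensorCut (ptransposeB M) (ptransposeB N) :=
  rfl

lemma ptransposeB_swapParties
    (Ω : Matrix ((ιA × ιA') × (ιB × ιB')) ((ιA × ιA') × (ιB × ιB')) ℂ) :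
    ptransposeB (swapParties Ω) = swapParties (ptransposeB Ω) :=
  rfl

lemma Matrix.PosSemidef.swapParties
    {Ω : Matrix ((ιA × ιA') × (ιB × ιB')) ((ιA × ιA') × (ιB × ιB')) ℂ} (hΩ : Ω.PosSemidef) :
    (swapParties Ω).PosSemidef :=
  hΩ.submatrix _

lemma ptraceA_tensorCut [Fintype ιA] [Fintype ιA'] (M : Matrix (ιA × ιB) (ιA × ιB) ℂ)
    (N : Matrix (ιA' × ιB') (ιA' × ιB') ℂ) :
    ptraceA (tensorCut M N) = ptraceA M ⊗ₖ ptraceA N := by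
  ext k l
  simp only [ptraceA, tensorCut, of_apply, kroneckerMap_apply, Fintype.sum_prod_type,
    Finset.sum_mul_sum]

lemma ptraceA_swapParties [Fintype ιA] [Fintype ιA']
    (Ω : Matrix ((ιA × ιA') × (ιB × ιB')) ((ιA × ιA') × (ιB × ιB')) ℂ) :
    ptraceA (swapParties Ω) = (ptraceA Ω).submatrix (Equiv.prodComm ιB' ιB)
      (Equiv.prodComm ιB' ιB) := by
  ext k l
  exact Fintype.sum_equiv (Equiv.prodComm ιA' ιA) _ _ fun _ => rfl

variable [Fintype ιA'] [Fintype ιB']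

/-- For `Ω` on `AA' : BB'`, the operator `Tr_{A'B'} [Ω (1 ⊗ P)]` on `A : B`. -/
def contractSnd (P : Matrix (ιA' × ιB') (ιA' × ιB') ℂ)
    (Ω : Matrix ((ιA × ιA') × (ιB × ιB')) ((ιA × ιA') × (ιB × ιB')) ℂ) :
    Matrix (ιA × ιB) (ιA × ιB) ℂ :=
  (Ω.submatrix (Equiv.prodProdProdComm ιA ιB ιA' ιB')
    (Equiv.prodProdProdComm ιA ιB ιA' ιB')).ptraceRightMul P

lemma ptransposeB_contractSnd (P : Matrix (ιA' × ιB') (ιA' × ιB') ℂ)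
    (Ω : Matrix ((ιA × ιA') × (ιB × ιB')) ((ιA × ιA') × (ιB × ιB')) ℂ) :
    ptransposeB (contractSnd P Ω) = contractSnd (ptransposeB P) (ptransposeB Ω) := by
  ext x y
  simp only [ptransposeB, contractSnd, ptraceRightMul, of_apply, submatrix_apply]
  rw [← Fintype.sum_prod_type', ← Fintype.sum_prod_type']
  let exchangeSnd : Equiv.Perm ((ιA' × ιB') × (ιA' × ιB')) :=
    Function.Involutive.toPerm (fun kl => ((kl.1.1, kl.2.2), (kl.2.1, kl.1.2))) fun _ => rfl
  exact Fintype.sum_equiv exchangeSnd _ _ fun _ => rfl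

variable [Fintype ιA]

lemma ptraceA_contractSnd_one_kronecker [DecidableEq ιA'] (T : Matrix ιB' ιB' ℂ)
    (Ω : Matrix ((ιA × ιA') × (ιB × ιB')) ((ιA × ιA') × (ιB × ιB')) ℂ) :
    ptraceA (contractSnd (1 ⊗ₖ T) Ω) = (ptraceA Ω).ptraceRightMul T := by
  ext k l
  simp only [ptraceA, contractSnd, ptraceRightMul, submatrix_apply, Equiv.prodProdProdComm_apply,
    kroneckerMap_apply, one_apply, ite_mul, one_mul, zero_mul, mul_ite, mul_zero,
    Fintype.sum_prod_type, Finset.sum_ite_irrel, Finset.sum_const_zero, Finset.sum_ite_eq',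
    Finset.mem_univ, ↓reduceIte, of_apply, Finset.sum_mul]
  simp only [Finset.sum_comm (γ := ιA')]
  simp only [Finset.sum_comm (γ := ιA)]

variable [Fintype ιB]

lemma Matrix.PosSemidef.tensorCut {M : Matrix (ιA × ιB) (ιA × ιB) ℂ}
    {N : Matrix (ιA' × ιB') (ιA' × ιB') ℂ} (hM : M.PosSemidef) (hN : N.PosSemidef) :
    (tensorCut M N).PosSemidef :=
  (hM.kronecker hN).submatrix (Equiv.prodProdProdComm ιA ιB ιA' ιB').symm

lemma Matrix.PosSemidef.contractSnd {P : Matrix (ιA' × ιB') (ιA' × ιB') ℂ}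
    {Ω : Matrix ((ιA × ιA') × (ιB × ιB')) ((ιA × ιA') × (ιB × ιB')) ℂ}
    (hP : P.PosSemidef) (hΩ : Ω.PosSemidef) : (contractSnd P Ω).PosSemidef :=
  (hΩ.submatrix _).ptraceRightMul hP

lemma tensorCut_mul (M M' : Matrix (ιA × ιB) (ιA × ιB) ℂ)
    (N N' : Matrix (ιA' × ιB') (ιA' × ιB') ℂ) :
    tensorCut M N * tensorCut M' N' = tensorCut (M * M') (N * N') := by
  simp only [tensorCut_eq_submatrix_kronecker, submatrix_mul_equiv, mul_kronecker_mul]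

lemma trace_tensorCut (M : Matrix (ιA × ιB) (ιA × ιB) ℂ)
    (N : Matrix (ιA' × ιB') (ιA' × ιB') ℂ) :
    (tensorCut M N).trace = M.trace * N.trace := by
  rw [tensorCut_eq_submatrix_kronecker, trace_submatrix_equiv, trace_kronecker]

lemma trace_tensorCut_mul (R : Matrix (ιA × ιB) (ιA × ιB) ℂ)
    (Q : Matrix (ιA' × ιB') (ιA' × ιB') ℂ)
    (Ω : Matrix ((ιA × ιA') × (ιB × ιB')) ((ιA × ιA') × (ιB × ιB')) ℂ) :
    (tensorCut R Q * Ω).trace = (R * contractSnd Q Ω).trace := by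
  rw [tensorCut_eq_submatrix_kronecker, trace_submatrix_mul_equiv, trace_kronecker_mul]
  rfl

lemma trace_tensorCut_mul_eq_swapParties (R : Matrix (ιA × ιB) (ιA × ιB) ℂ)
    (Q : Matrix (ιA' × ιB') (ιA' × ιB') ℂ)
    (Ω : Matrix ((ιA × ιA') × (ιB × ιB')) ((ιA × ιA') × (ιB × ιB')) ℂ) :
    (tensorCut R Q * Ω).trace = (tensorCut Q R * swapParties Ω).trace := by
  let s := (Equiv.prodComm ιA' ιA).prodCongr (Equiv.prodComm ιB' ιB)
  have hQR : tensorCut Q R = (tensorCut R Q).submatrix s s := by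
    ext p q
    exact mul_comm _ _
  rw [hQR, swapParties, submatrix_mul_equiv, trace_submatrix_equiv]

lemma star_dotProduct_ptraceA_contractSnd_mulVec [DecidableEq ιA]
    (Q : Matrix (ιA' × ιB') (ιA' × ιB') ℂ)
    (Ω : Matrix ((ιA × ιA') × (ιB × ιB')) ((ιA × ιA') × (ιB × ιB')) ℂ) (x : ιB → ℂ) :
    star x ⬝ᵥ ptraceA (contractSnd Q Ω) *ᵥ x
      = (Q * contractSnd (1 ⊗ₖ vecMulVec x (star x)) (swapParties Ω)).trace := by
  rw [star_dotProduct_ptraceA_mulVec, ← trace_tensorCut_mul, trace_tensorCut_mul_eq_swapParties,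
    trace_tensorCut_mul]

end Bipartite

open scoped MatrixOrder

section CvPPT

variable {ιA ιB : Type*} [Fintype ιA] [Fintype ιB] [DecidableEq ιB]

lemma bddAbove_cvPPT_values (X : Matrix (ιA × ιB) (ιA × ιB) ℂ) :
    BddAbove {r | ∃ Ω : Matrix (ιA × ιB) (ιA × ιB) ℂ,
      Ω.PosSemidef ∧ (ptransposeB Ω).PosSemidef ∧ ptraceA Ω = 1 ∧
        r = ((X * Ω).trace).re} := by
  refine ⟨(∑ p, ∑ q, ‖X p q‖) * Fintype.card ιB, ?_⟩
  rintro _ ⟨Ω, hΩ, -, hTr, rfl⟩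
  have hcard : Ω.trace = Fintype.card ιB := by
    rw [← trace_ptraceA, hTr, trace_one]
  simpa [hcard] using X.re_trace_mul_le hΩ

lemma le_cvPPT (X : Matrix (ιA × ιB) (ιA × ιB) ℂ) {Ω : Matrix (ιA × ιB) (ιA × ιB) ℂ}
    (hΩ : Ω.PosSemidef) (hΓΩ : (ptransposeB Ω).PosSemidef) (hTr : ptraceA Ω = 1) :
    ((X * Ω).trace).re ≤ cvPPT X :=
  le_csSup (bddAbove_cvPPT_values X) ⟨Ω, hΩ, hΓΩ, hTr, rfl⟩

lemma cvPPT_nonneg {X : Matrix (ιA × ιB) (ιA × ιB) ℂ} (hX : X.PosSemidef) : 0 ≤ cvPPT X :=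
  Real.sSup_nonneg fun _ ⟨_, hΩ, _, _, hr⟩ => hr ▸ hX.re_trace_mul_nonneg hΩ

lemma re_trace_mul_le_smul_cvPPT (X : Matrix (ιA × ιB) (ιA × ιB) ℂ)
    {Ω : Matrix (ιA × ιB) (ιA × ιB) ℂ} (hΩ : Ω.PosSemidef) (hΓΩ : (ptransposeB Ω).PosSemidef)
    {c : ℝ} (hc : 0 ≤ c) (hTr : ptraceA Ω = (c : ℂ) • 1) :
    ((X * Ω).trace).re ≤ c * cvPPT X := by
  rcases hc.eq_or_lt with rfl | hc
  · have hΩ0 : Ω = 0 := by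
      rw [← hΩ.trace_eq_zero_iff, ← trace_ptraceA, hTr]
      simp
    simp [hΩ0]
  · have hle := le_cvPPT X (Ω := ((c⁻¹ : ℝ) : ℂ) • Ω) (hΩ.smul (by positivity))
      (by rw [ptransposeB_smul]; exact hΓΩ.smul (by positivity))
      (by rw [ptraceA_smul, hTr, smul_smul, ← Complex.ofReal_mul, inv_mul_cancel₀ hc.ne',
        Complex.ofReal_one, one_smul])
    rw [Matrix.mul_smul, trace_smul, smul_eq_mul, Complex.re_ofReal_mul] at hle
    rwa [← le_div_iff₀' (inv_pos.mpr hc), div_inv_eq_mul, mul_comm] at hle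

lemma re_trace_mul_le_cvPPT_of_ptraceA_le
    {X : Matrix (ιA × ιB) (ιA × ιB) ℂ} (hX : X.PosSemidef)
    {Ω : Matrix (ιA × ιB) (ιA × ιB) ℂ} (hΩ : Ω.PosSemidef) (hΓΩ : (ptransposeB Ω).PosSemidef)
    {c : ℝ} (hc : 0 ≤ c) (hle : ptraceA Ω ≤ (c : ℂ) • 1) :
    ((X * Ω).trace).re ≤ c * cvPPT X := by
  classical
  cases isEmpty_or_nonempty ιA
  · simpa [trace] using mul_nonneg hc (cvPPT_nonneg hX)
  -- spread the defect `c • 1 - Tr_A Ω` uniformly over `A` to reach a feasible point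
  set D := (1 : Matrix ιA ιA ℂ) ⊗ₖ (((Fintype.card ιA : ℝ)⁻¹ : ℂ) • ((c : ℂ) • 1 - ptraceA Ω))
  have hdefect := (Matrix.le_iff.mp hle).smul (a := ((Fintype.card ιA : ℝ)⁻¹ : ℂ))
    (by positivity)
  have hD : D.PosSemidef := PosSemidef.one.kronecker hdefect
  have hΓD : (ptransposeB D).PosSemidef := by
    rw [ptransposeB_kronecker]
    exact PosSemidef.one.kronecker hdefect.transpose
  have hTrD : ptraceA D = (c : ℂ) • 1 - ptraceA Ω := by
    rw [ptraceA_kronecker, trace_one, smul_smul,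
      show ((Fintype.card ιA : ℂ) * ((Fintype.card ιA : ℝ)⁻¹ : ℂ)) = 1 by
        push_cast; exact mul_inv_cancel₀ (Nat.cast_ne_zero.mpr Fintype.card_ne_zero),
      one_smul]
  have hsum := re_trace_mul_le_smul_cvPPT X (hΩ.add hD)
    (by rw [ptransposeB_add]; exact hΓΩ.add hΓD) hc (by rw [ptraceA_add, hTrD, add_sub_cancel])
  rw [Matrix.mul_add, trace_add, Complex.add_re] at hsum
  have hXD : 0 ≤ ((X * D).trace).re := hX.re_trace_mul_nonneg hD
  linarith

end CvPPT

section Multiplicativity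

variable {ιA ιB ιA' ιB' : Type*} [Fintype ιA] [Fintype ιB] [DecidableEq ιB]
  [Fintype ιA'] [Fintype ιB'] [DecidableEq ιB']

lemma re_star_dotProduct_ptraceA_contractSnd_mulVec_le (Q : Matrix (ιA' × ιB') (ιA' × ιB') ℂ)
    {Ω : Matrix ((ιA × ιA') × (ιB × ιB')) ((ιA × ιA') × (ιB × ιB')) ℂ}
    (hΩ : Ω.PosSemidef) (hΓΩ : (ptransposeB Ω).PosSemidef) (hTr : ptraceA Ω = 1) (x : ιB → ℂ) :
    (star x ⬝ᵥ ptraceA (contractSnd Q Ω) *ᵥ x).re ≤ (star x ⬝ᵥ x).re * cvPPT Q := by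
  classical
  have hT := posSemidef_vecMulVec_self_star x
  have hTrT : (vecMulVec x (star x)).trace = ((star x ⬝ᵥ x).re : ℂ) := by
    rw [trace_vecMulVec, dotProduct_comm]
    exact Complex.eq_re_of_ofReal_le (r := 0) (by
      rw [Complex.ofReal_zero]; exact dotProduct_star_self_nonneg x)
  set Ωx := contractSnd (1 ⊗ₖ vecMulVec x (star x)) (swapParties Ω)
  have hΩx : Ωx.PosSemidef := (PosSemidef.one.kronecker hT).contractSnd hΩ.swapParties
  have hΓΩx : (ptransposeB Ωx).PosSemidef := by
    rw [ptransposeB_contractSnd, ptransposeB_kronecker, ptransposeB_swapParties]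
    exact (PosSemidef.one.kronecker hT.transpose).contractSnd hΓΩ.swapParties
  have hTrΩx : ptraceA Ωx = ((star x ⬝ᵥ x).re : ℂ) • 1 := by
    rw [ptraceA_contractSnd_one_kronecker, ptraceA_swapParties, hTr, submatrix_one_equiv,
      ptraceRightMul_one, hTrT]
  rw [star_dotProduct_ptraceA_contractSnd_mulVec]
  exact re_trace_mul_le_smul_cvPPT Q hΩx hΓΩx
    (Complex.nonneg_iff.mp (dotProduct_star_self_nonneg x)).1 hTrΩx

lemma ptraceA_contractSnd_le_cvPPT {Q : Matrix (ιA' × ιB') (ιA' × ιB') ℂ} (hQ : Q.PosSemidef)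
    {Ω : Matrix ((ιA × ιA') × (ιB × ιB')) ((ιA × ιA') × (ιB × ιB')) ℂ}
    (hΩ : Ω.PosSemidef) (hΓΩ : (ptransposeB Ω).PosSemidef) (hTr : ptraceA Ω = 1) :
    ptraceA (contractSnd Q Ω) ≤ (cvPPT Q : ℂ) • 1 := by
  have hσ := (hQ.contractSnd hΩ).ptraceA
  have hc : (0 : ℂ) ≤ cvPPT Q := Complex.zero_le_real.mpr (cvPPT_nonneg hQ)
  refine .of_dotProduct_mulVec_nonneg ((PosSemidef.one.smul hc).1.sub hσ.1) fun x => ?_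
  have hx : star x ⬝ᵥ x = ((star x ⬝ᵥ x).re : ℂ) := Complex.eq_re_of_ofReal_le (r := 0) (by
    rw [Complex.ofReal_zero]; exact dotProduct_star_self_nonneg x)
  rw [sub_mulVec, smul_mulVec, one_mulVec, dotProduct_sub, dotProduct_smul, hx, smul_eq_mul,
    Complex.nonneg_iff]
  constructor
  · rw [Complex.sub_re, ← Complex.ofReal_mul, Complex.ofReal_re, sub_nonneg, mul_comm]
    exact re_star_dotProduct_ptraceA_contractSnd_mulVec_le Q hΩ hΓΩ hTr x
  · have him : (star x ⬝ᵥ ptraceA (contractSnd Q Ω) *ᵥ x).im = 0 :=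
      hσ.1.im_star_dotProduct_mulVec_self x
    rw [Complex.sub_im, ← Complex.ofReal_mul, Complex.ofReal_im, him, sub_zero]

lemma cvPPT_tensorCut_le {R : Matrix (ιA × ιB) (ιA × ιB) ℂ}
    {Q : Matrix (ιA' × ιB') (ιA' × ιB') ℂ} (hR : R.PosSemidef) (hQ : Q.PosSemidef)
    (hQppt : (ptransposeB Q).PosSemidef) :
    cvPPT (tensorCut R Q) ≤ cvPPT R * cvPPT Q := by
  refine Real.sSup_le ?_ (mul_nonneg (cvPPT_nonneg hR) (cvPPT_nonneg hQ))
  rintro _ ⟨Ω, hΩ, hΓΩ, hTr, rfl⟩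
  rw [trace_tensorCut_mul, mul_comm]
  refine re_trace_mul_le_cvPPT_of_ptraceA_le hR (hQ.contractSnd hΩ) ?_ (cvPPT_nonneg hQ)
    (ptraceA_contractSnd_le_cvPPT hQ hΩ hΓΩ hTr)
  rw [ptransposeB_contractSnd]
  exact hQppt.contractSnd hΓΩ

lemma mul_cvPPT_le_cvPPT_tensorCut {R : Matrix (ιA × ιB) (ιA × ιB) ℂ}
    {Q : Matrix (ιA' × ιB') (ιA' × ιB') ℂ} (hR : R.PosSemidef) (hQ : Q.PosSemidef) :
    cvPPT R * cvPPT Q ≤ cvPPT (tensorCut R Q) := by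
  refine Real.sSup_mul_sSup_le ?_ ?_ (cvPPT_nonneg (hR.tensorCut hQ)) ?_
  · rintro _ ⟨Ω, hΩ, -, -, rfl⟩
    exact hR.re_trace_mul_nonneg hΩ
  · rintro _ ⟨Ω, hΩ, -, -, rfl⟩
    exact hQ.re_trace_mul_nonneg hΩ
  rintro _ ⟨Ω₁, hΩ₁, hΓΩ₁, hTr₁, rfl⟩ _ ⟨Ω₂, hΩ₂, hΓΩ₂, hTr₂, rfl⟩
  have hval : ((tensorCut R Q * tensorCut Ω₁ Ω₂).trace).re
      = ((R * Ω₁).trace).re * ((Q * Ω₂).trace).re := by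
    have him₁ := Complex.nonneg_iff.mp (hR.trace_mul_nonneg hΩ₁)
    have him₂ := Complex.nonneg_iff.mp (hQ.trace_mul_nonneg hΩ₂)
    rw [tensorCut_mul, trace_tensorCut, Complex.mul_re, ← him₁.2, ← him₂.2, mul_zero, sub_zero]
  rw [← hval]
  refine le_cvPPT _ (hΩ₁.tensorCut hΩ₂) ?_ ?_
  · rw [ptransposeB_tensorCut]
    exact hΓΩ₁.tensorCut hΓΩ₂
  · rw [ptraceA_tensorCut, hTr₁, hTr₂, one_kronecker_one]

end Multiplicativity

theorem cvPPT_mult_of_ppt_general {ιA ιB ιA' ιB' : Type*}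
    [Fintype ιA] [Fintype ιB] [DecidableEq ιB]
    [Fintype ιA'] [Fintype ιB'] [DecidableEq ιB']
    (R : Matrix (ιA × ιB) (ιA × ιB) ℂ) (Q : Matrix (ιA' × ιB') (ιA' × ιB') ℂ)
    (hR : R.PosSemidef)
    (hQ : Q.PosSemidef) (hQppt : (ptransposeB Q).PosSemidef) :
    cvPPT (tensorCut R Q) = cvPPT R * cvPPT Q :=
  (cvPPT_tensorCut_le hR hQ hQppt).antisymm (mul_cvPPT_le_cvPPT_tensorCut hR hQ)

/-- The PPT communication value is multiplicative on tensor products of PPT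
operators. -/
theorem cvPPT_mult_of_ppt {ιA ιB ιA' ιB' : Type*}
    [Fintype ιA] [DecidableEq ιA] [Fintype ιB] [DecidableEq ιB]
    [Fintype ιA'] [DecidableEq ιA'] [Fintype ιB'] [DecidableEq ιB']
    (R : Matrix (ιA × ιB) (ιA × ιB) ℂ) (Q : Matrix (ιA' × ιB') (ιA' × ιB') ℂ)
    (hR : R.PosSemidef) (hRppt : (ptransposeB R).PosSemidef)
    (hQ : Q.PosSemidef) (hQppt : (ptransposeB Q).PosSemidef) :
    cvPPT (tensorCut R Q) = cvPPT R * cvPPT Q :=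
  cvPPT_mult_of_ppt_general R Q hR hQ hQppt
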